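/- arXiv:1303.5934 — 5 statements merged into one kernel-verified Lean document; each statement's English description precedes it below -/
import Mathlib

section
/- Let D₁, …, Dₙ be independent identically distributed normal random variables with mean μ and standard deviation σ > 0, let X be a real number, and set Y = (X − μ)/σ. Then the expected transshipment amount E[min(∑ᵢ max(X − Dᵢ, 0), ∑ᵢ max(Dᵢ − X, 0))] equals nσ ∫_{−∞}^{Y} (Φ(ξ) − Φ(√n · ξ)) dξ, where Φ denotes the cdf of the standard normal distribution. -/
open MeasureTheory ProbabilityTheory Real

open scoped NNReal ENNReal

/-- The cdf `Φ` of the standard normal distribution. -/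
noncomputable def stdNormalCDF (x : ℝ) : ℝ := ProbabilityTheory.cdf (gaussianReal 0 1) x

lemma pdf_conv (μ₁ μ₂ : ℝ) (v₁ v₂ : ℝ≥0) (hv₁ : v₁ ≠ 0) (hv₂ : v₂ ≠ 0) (z x : ℝ) :
    gaussianPDFReal μ₁ v₁ x * gaussianPDFReal μ₂ v₂ (z - x)
      = gaussianPDFReal (μ₁ + μ₂) (v₁ + v₂) z *
        gaussianPDFReal ((v₂ * μ₁ + v₁ * (z - μ₂)) / (v₁ + v₂)) (v₁ * v₂ / (v₁ + v₂)) x := by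
  have h1 : (0:ℝ) < v₁ := lt_of_le_of_ne v₁.coe_nonneg (by exact_mod_cast (Ne.symm hv₁))
  have h2 : (0:ℝ) < v₂ := lt_of_le_of_ne v₂.coe_nonneg (by exact_mod_cast (Ne.symm hv₂))
  have h12 : (0:ℝ) < v₁ + v₂ := by positivity
  have hw : ((v₁ * v₂ / (v₁ + v₂) : ℝ≥0) : ℝ) = (v₁ : ℝ) * v₂ / ((v₁ : ℝ) + v₂) := by
    push_cast [NNReal.coe_div]; ring
  have hpi : (0:ℝ) < 2 * π := by positivity
  unfold gaussianPDFReal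
  rw [hw]
  push_cast
  rw [mul_mul_mul_comm, ← Real.exp_add, mul_mul_mul_comm _ _ _ (rexp _), ← Real.exp_add]
  congr 1
  · rw [← Real.sqrt_inv, ← Real.sqrt_inv, ← Real.sqrt_inv, ← Real.sqrt_inv,
      ← Real.sqrt_mul (by positivity), ← Real.sqrt_mul (by positivity)]
    congr 1
    field_simp
  · congr 1
    field_simp
    ring

lemma pdf_conv_lintegral (μ₁ μ₂ : ℝ) (v₁ v₂ : ℝ≥0) (hv₁ : v₁ ≠ 0) (hv₂ : v₂ ≠ 0) (z : ℝ) :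
    ∫⁻ x, gaussianPDF μ₁ v₁ x * gaussianPDF μ₂ v₂ (z - x) ∂volume
      = gaussianPDF (μ₁ + μ₂) (v₁ + v₂) z := by
  have hw : v₁ * v₂ / (v₁ + v₂) ≠ 0 := by
    positivity
  simp only [gaussianPDF]
  calc ∫⁻ x, ENNReal.ofReal (gaussianPDFReal μ₁ v₁ x) *
        ENNReal.ofReal (gaussianPDFReal μ₂ v₂ (z - x)) ∂volume
      = ∫⁻ x, ENNReal.ofReal (gaussianPDFReal (μ₁ + μ₂) (v₁ + v₂) z) *
          ENNReal.ofReal (gaussianPDFReal ((v₂ * μ₁ + v₁ * (z - μ₂)) / (v₁ + v₂))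
            (v₁ * v₂ / (v₁ + v₂)) x) ∂volume := by
        congr 1; ext x
        rw [← ENNReal.ofReal_mul (gaussianPDFReal_nonneg _ _ _),
          ← ENNReal.ofReal_mul (gaussianPDFReal_nonneg _ _ _), pdf_conv μ₁ μ₂ v₁ v₂ hv₁ hv₂ z x]
    _ = ENNReal.ofReal (gaussianPDFReal (μ₁ + μ₂) (v₁ + v₂) z) := by
        rw [lintegral_const_mul _ ((measurable_gaussianPDFReal _ _).ennreal_ofReal),
          ← gaussianPDF_def, lintegral_gaussianPDF_eq_one _ hw, mul_one]

lemma gaussian_conv (μ₁ μ₂ : ℝ) (v₁ v₂ : ℝ≥0) (hv₁ : v₁ ≠ 0) (hv₂ : v₂ ≠ 0) :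
    Measure.map (fun p : ℝ × ℝ => p.1 + p.2) ((gaussianReal μ₁ v₁).prod (gaussianReal μ₂ v₂))
      = gaussianReal (μ₁ + μ₂) (v₁ + v₂) := by
  have hv12 : v₁ + v₂ ≠ 0 := by positivity
  refine MeasureTheory.Measure.ext_of_Iic _ _ (fun a => ?_)
  rw [Measure.map_apply measurable_add measurableSet_Iic]
  have hpre : (fun p : ℝ × ℝ => p.1 + p.2) ⁻¹' Set.Iic a = {p : ℝ × ℝ | p.1 + p.2 ≤ a} := rfl
  rw [hpre, Measure.prod_apply (by exact measurableSet_le (by fun_prop) measurable_const)]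
  have hslice : ∀ x : ℝ, (Prod.mk x ⁻¹' {p : ℝ × ℝ | p.1 + p.2 ≤ a}) = Set.Iic (a - x) := by
    intro x; ext y; simp [Set.mem_Iic]; constructor <;> intro h <;> linarith
  simp_rw [hslice]
  -- rewrite inner measure as a lintegral over z in Iic a
  have hinner : ∀ x : ℝ, (gaussianReal μ₂ v₂) (Set.Iic (a - x))
      = ∫⁻ z, (Set.Iic a).indicator (fun z => gaussianPDF μ₂ v₂ (z - x)) z ∂volume := by
    intro x
    rw [gaussianReal_apply _ hv₂ _]
    rw [← lintegral_indicator measurableSet_Iic]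
    rw [← lintegral_add_right_eq_self
      (fun z => (Set.Iic a).indicator (fun z => gaussianPDF μ₂ v₂ (z - x)) z) x]
    congr 1; ext y
    by_cases hy : y ≤ a - x
    · rw [Set.indicator_of_mem (by exact hy), Set.indicator_of_mem (by simp; linarith)]
      simp
    · rw [Set.indicator_of_notMem (by exact hy), Set.indicator_of_notMem (by simp; linarith)]
  simp_rw [hinner]
  have hF : Measurable (Function.uncurry fun (x z : ℝ) =>
      (Set.Iic a).indicator (fun z => gaussianPDF μ₂ v₂ (z - x)) z) := by
    have : (Function.uncurry fun (x z : ℝ) =>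
        (Set.Iic a).indicator (fun z => gaussianPDF μ₂ v₂ (z - x)) z)
        = Set.indicator {p : ℝ × ℝ | p.2 ≤ a} (fun p => gaussianPDF μ₂ v₂ (p.2 - p.1)) := by
      ext p
      by_cases hp : p.2 ≤ a
      · rw [Set.indicator_of_mem (by exact hp), Function.uncurry]
        rw [Set.indicator_of_mem (by exact hp)]
      · rw [Set.indicator_of_notMem (by exact hp), Function.uncurry]
        rw [Set.indicator_of_notMem (by exact hp)]
    rw [this]
    exact ((measurable_gaussianPDF _ _).comp (by fun_prop)).indicator
      (measurableSet_le (by fun_prop) measurable_const)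
  have hminner : Measurable fun x : ℝ => ∫⁻ z, (Set.Iic a).indicator
      (fun z => gaussianPDF μ₂ v₂ (z - x)) z ∂volume := Measurable.lintegral_prod_right hF
  have hG : Measurable (Function.uncurry fun (x z : ℝ) =>
      (Set.Iic a).indicator (fun z => gaussianPDF μ₁ v₁ x * gaussianPDF μ₂ v₂ (z - x)) z) := by
    have : (Function.uncurry fun (x z : ℝ) =>
        (Set.Iic a).indicator (fun z => gaussianPDF μ₁ v₁ x * gaussianPDF μ₂ v₂ (z - x)) z)
        = Set.indicator {p : ℝ × ℝ | p.2 ≤ a}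
            (fun p => gaussianPDF μ₁ v₁ p.1 * gaussianPDF μ₂ v₂ (p.2 - p.1)) := by
      ext p
      by_cases hp : p.2 ≤ a
      · rw [Set.indicator_of_mem (by exact hp), Function.uncurry]
        rw [Set.indicator_of_mem (by exact hp)]
      · rw [Set.indicator_of_notMem (by exact hp), Function.uncurry]
        rw [Set.indicator_of_notMem (by exact hp)]
    rw [this]
    exact (((measurable_gaussianPDF _ _).comp measurable_fst).mul
      ((measurable_gaussianPDF _ _).comp (by fun_prop))).indicator
      (measurableSet_le (by fun_prop) measurable_const)
  rw [gaussianReal_of_var_ne_zero _ hv₁, gaussianPDF_def,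
    lintegral_withDensity_eq_lintegral_mul _ ((measurable_gaussianPDFReal _ _).ennreal_ofReal)
      hminner]
  simp only [Pi.mul_apply]
  have hpull : ∀ x : ℝ, ENNReal.ofReal (gaussianPDFReal μ₁ v₁ x) *
      (∫⁻ z, (Set.Iic a).indicator (fun z => gaussianPDF μ₂ v₂ (z - x)) z ∂volume)
      = ∫⁻ z, (Set.Iic a).indicator
          (fun z => gaussianPDF μ₁ v₁ x * gaussianPDF μ₂ v₂ (z - x)) z ∂volume := by
    intro x
    have hfx : Measurable fun z : ℝ =>
        (Set.Iic a).indicator (fun z => gaussianPDF μ₂ v₂ (z - x)) z := by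
      exact hF.comp measurable_prodMk_left
    rw [← lintegral_const_mul _ hfx]
    congr 1; ext z
    by_cases hz : z ∈ Set.Iic a
    · simp only [Function.uncurry, Set.indicator_of_mem hz, gaussianPDF]
    · simp only [Function.uncurry, Set.indicator_of_notMem hz, mul_zero, gaussianPDF]
  simp_rw [hpull]
  rw [lintegral_lintegral_swap hG.aemeasurable]
  have hpull2 : ∀ z : ℝ, (∫⁻ x, (Set.Iic a).indicator
      (fun z => gaussianPDF μ₁ v₁ x * gaussianPDF μ₂ v₂ (z - x)) z ∂volume)
      = (Set.Iic a).indicator (fun z => gaussianPDF (μ₁ + μ₂) (v₁ + v₂) z) z := by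
    intro z
    by_cases hz : z ∈ Set.Iic a
    · simp only [Set.indicator_of_mem hz]
      exact pdf_conv_lintegral μ₁ μ₂ v₁ v₂ hv₁ hv₂ z
    · simp only [Set.indicator_of_notMem hz, lintegral_zero]
  simp_rw [hpull2]
  rw [lintegral_indicator measurableSet_Iic, gaussianReal_apply _ hv12]

lemma gaussian_conv' (μ₁ μ₂ : ℝ) (v₁ v₂ : ℝ≥0) (hv₁ : v₁ ≠ 0) :
    Measure.map (fun p : ℝ × ℝ => p.1 + p.2) ((gaussianReal μ₁ v₁).prod (gaussianReal μ₂ v₂))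
      = gaussianReal (μ₁ + μ₂) (v₁ + v₂) := by
  by_cases hv₂ : v₂ = 0
  · rw [hv₂, gaussianReal_zero_var, Measure.prod_dirac, Measure.map_map measurable_add (by fun_prop)]
    have : ((fun p : ℝ × ℝ => p.1 + p.2) ∘ fun x : ℝ => (x, μ₂)) = (· + μ₂) := rfl
    rw [this, gaussianReal_map_add_const, add_zero]
  · exact gaussian_conv μ₁ μ₂ v₁ v₂ hv₁ hv₂

lemma map_add_gaussian {Ω : Type*} [MeasureSpace Ω] [IsProbabilityMeasure (ℙ : Measure Ω)]
    {X Y : Ω → ℝ} {μ₁ μ₂ : ℝ} {v₁ v₂ : ℝ≥0}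
    (hX : Measurable X) (hY : Measurable Y) (hXY : IndepFun X Y ℙ)
    (h1 : Measure.map X ℙ = gaussianReal μ₁ v₁) (h2 : Measure.map Y ℙ = gaussianReal μ₂ v₂)
    (hv₁ : v₁ ≠ 0) :
    Measure.map (fun ω => X ω + Y ω) ℙ = gaussianReal (μ₁ + μ₂) (v₁ + v₂) := by
  have hpair : Measure.map (fun ω => (X ω, Y ω)) ℙ = (gaussianReal μ₁ v₁).prod (gaussianReal μ₂ v₂) := by
    rw [← h1, ← h2]
    exact ((indepFun_iff_map_prod_eq_prod_map_map hX.aemeasurable hY.aemeasurable).mp hXY)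
  have : (fun ω => X ω + Y ω) = (fun p : ℝ × ℝ => p.1 + p.2) ∘ (fun ω => (X ω, Y ω)) := rfl
  rw [this, ← Measure.map_map measurable_add (hX.prodMk hY), hpair]
  exact gaussian_conv' μ₁ μ₂ v₁ v₂ hv₁

lemma map_sum_gaussian {Ω : Type*} [MeasureSpace Ω] [IsProbabilityMeasure (ℙ : Measure Ω)]
    {n : ℕ} {D : Fin n → Ω → ℝ} {μ : ℝ} {v : ℝ≥0}
    (hmeas : ∀ i, Measurable (D i))
    (hD : ∀ i, Measure.map (D i) ℙ = gaussianReal μ v)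
    (hindep : iIndepFun D ℙ) (hv : v ≠ 0) (s : Finset (Fin n)) :
    Measure.map (fun ω => ∑ i ∈ s, D i ω) ℙ
      = gaussianReal (s.card * μ) ((s.card : ℝ≥0) * v) := by
  induction s using Finset.cons_induction with
  | empty =>
      simp only [Finset.sum_empty, Finset.card_empty, Nat.cast_zero, zero_mul]
      rw [gaussianReal_zero_var, Measure.map_const]
      simp
  | cons a s ha ih =>
      have hsum_meas : Measurable fun ω => ∑ i ∈ s, D i ω := by
        exact Finset.measurable_sum s (fun i _ => hmeas i)
      have hfn : (∑ i ∈ s, D i) = fun ω => ∑ i ∈ s, D i ω := by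
        ext ω; simp [Finset.sum_apply]
      have hind : IndepFun (D a) (fun ω => ∑ i ∈ s, D i ω) ℙ := by
        have := (hindep.indepFun_finsetSum_of_notMem hmeas ha).symm
        rwa [hfn] at this
      have := map_add_gaussian (hmeas a) hsum_meas hind (hD a) ih hv
      simp only [Finset.sum_cons]
      rw [this, Finset.card_cons]
      congr 1
      · push_cast; ring
      · push_cast; ring

lemma gaussianReal_noAtoms {μ : ℝ} {v : ℝ≥0} (hv : v ≠ 0) : NullSingletonClass (gaussianReal μ v) := by
  constructor
  intro x
  rw [gaussianReal_apply _ hv]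
  exact setLIntegral_measure_zero _ _ (measure_singleton x)

lemma ofReal_max_zero (a : ℝ) : ENNReal.ofReal (max a 0) = ENNReal.ofReal a := by
  rcases le_total a 0 with h | h
  · rw [max_eq_right h, ENNReal.ofReal_zero, eq_comm, ENNReal.ofReal_eq_zero.mpr h]
  · rw [max_eq_left h]

lemma lint_max (γ : Measure ℝ) [IsProbabilityMeasure γ] [NullSingletonClass γ] (c : ℝ) :
    ∫⁻ t, ENNReal.ofReal (max (c - t) 0) ∂γ
      = ∫⁻ s in Set.Iic c, γ (Set.Iic s) ∂volume := by
  have h1 : ∀ t : ℝ, ENNReal.ofReal (max (c - t) 0)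
      = ∫⁻ s, (Set.Ioc t c).indicator (fun _ => (1 : ℝ≥0∞)) s ∂volume := by
    intro t
    rw [lintegral_indicator measurableSet_Ioc, setLIntegral_one, Real.volume_Ioc,
      ofReal_max_zero]
  simp_rw [h1]
  have hswap : ∫⁻ t, ∫⁻ s, (Set.Ioc t c).indicator (fun _ => (1:ℝ≥0∞)) s ∂volume ∂γ
      = ∫⁻ s, ∫⁻ t, (Set.Ioc t c).indicator (fun _ => (1:ℝ≥0∞)) s ∂γ ∂volume := by
    apply lintegral_lintegral_swap
    have : (Function.uncurry fun (t s : ℝ) => (Set.Ioc t c).indicator (fun _ => (1:ℝ≥0∞)) s)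
        = Set.indicator {p : ℝ × ℝ | p.1 < p.2 ∧ p.2 ≤ c} (fun _ => (1:ℝ≥0∞)) := by
      ext p
      by_cases hp : p.1 < p.2 ∧ p.2 ≤ c
      · rw [Set.indicator_of_mem (by exact hp), Function.uncurry,
          Set.indicator_of_mem (by simpa [Set.mem_Ioc] using hp)]
      · rw [Set.indicator_of_notMem (by exact hp), Function.uncurry,
          Set.indicator_of_notMem (by simpa [Set.mem_Ioc] using hp)]
    rw [this]
    exact (Measurable.indicator measurable_const
      ((measurableSet_lt measurable_fst measurable_snd).inter
        (measurableSet_le measurable_snd measurable_const))).aemeasurable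
  rw [hswap]
  have h2 : ∀ s : ℝ, (∫⁻ t, (Set.Ioc t c).indicator (fun _ => (1:ℝ≥0∞)) s ∂γ)
      = (Set.Iic c).indicator (fun s => γ (Set.Iic s)) s := by
    intro s
    by_cases hs : s ≤ c
    · have : ∀ t : ℝ, (Set.Ioc t c).indicator (fun _ => (1:ℝ≥0∞)) s
          = (Set.Iio s).indicator (fun _ => (1:ℝ≥0∞)) t := by
        intro t
        by_cases ht : t < s
        · rw [Set.indicator_of_mem (show s ∈ Set.Ioc t c from ⟨ht, hs⟩),
            Set.indicator_of_mem (show t ∈ Set.Iio s from ht)]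
        · rw [Set.indicator_of_notMem (show s ∉ Set.Ioc t c from fun h => absurd h.1 ht),
            Set.indicator_of_notMem (show t ∉ Set.Iio s from ht)]
      simp_rw [this]
      rw [lintegral_indicator measurableSet_Iio, setLIntegral_one,
        Set.indicator_of_mem (by exact hs)]
      exact measure_congr (Iio_ae_eq_Iic)
    · have : ∀ t : ℝ, (Set.Ioc t c).indicator (fun _ => (1:ℝ≥0∞)) s = 0 := by
        intro t
        rw [Set.indicator_of_notMem (show s ∉ Set.Ioc t c from fun h => absurd h.2 hs)]
      simp_rw [this]
      rw [lintegral_zero, Set.indicator_of_notMem (by exact hs)]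
  simp_rw [h2]
  rw [lintegral_indicator measurableSet_Iic]

lemma integral_max_eq (γ : Measure ℝ) [IsProbabilityMeasure γ] [NullSingletonClass γ] (c : ℝ) :
    ∫ t, max (c - t) 0 ∂γ = ∫ s in Set.Iic c, ProbabilityTheory.cdf γ s ∂volume := by
  rw [integral_eq_lintegral_of_nonneg_ae (f := fun t => max (c - t) 0) (μ := γ)
      (ae_of_all _ fun t => le_max_right _ _)
      (Continuous.aestronglyMeasurable (by continuity)),
    integral_eq_lintegral_of_nonneg_ae (f := fun s => ProbabilityTheory.cdf γ s)
      (μ := volume.restrict (Set.Iic c))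
      (ae_of_all _ fun s => cdf_nonneg γ s)
      ((monotone_cdf γ).measurable.aestronglyMeasurable)]
  congr 1
  simp_rw [ofReal_cdf]
  exact lint_max γ c

lemma integrableOn_cdf (γ : Measure ℝ) [IsProbabilityMeasure γ] [NullSingletonClass γ] (c : ℝ)
    (h : Integrable (fun t => max (c - t) 0) γ) :
    IntegrableOn (ProbabilityTheory.cdf γ) (Set.Iic c) volume := by
  refine ⟨(monotone_cdf γ).measurable.aestronglyMeasurable, ?_⟩
  rw [hasFiniteIntegral_iff_ofReal (f := fun s => ProbabilityTheory.cdf γ s)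
    (ae_of_all _ fun s => cdf_nonneg γ s)]
  have := h.hasFiniteIntegral
  rw [hasFiniteIntegral_iff_ofReal (f := fun t => max (c - t) 0)
    (ae_of_all _ fun t => le_max_right _ _)] at this
  calc ∫⁻ s in Set.Iic c, ENNReal.ofReal (ProbabilityTheory.cdf γ s) ∂volume
      = ∫⁻ s in Set.Iic c, γ (Set.Iic s) ∂volume := by simp_rw [ofReal_cdf]
    _ = ∫⁻ t, ENNReal.ofReal (max (c - t) 0) ∂γ := (lint_max γ c).symm
    _ < ⊤ := this

lemma integrable_max_gaussian (m : ℝ) (v : ℝ≥0) (hv : v ≠ 0) (c : ℝ) :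
    Integrable (fun t => max (c - t) 0) (gaussianReal m v) := by
  have hvpos : (0:ℝ) < v := lt_of_le_of_ne v.coe_nonneg (by exact_mod_cast (Ne.symm hv))
  rw [gaussianReal_of_var_ne_zero _ hv, gaussianPDF_def,
    integrable_withDensity_iff ((measurable_gaussianPDFReal _ _).ennreal_ofReal)
      (ae_of_all _ fun x => ENNReal.ofReal_lt_top)]
  simp_rw [ENNReal.toReal_ofReal (gaussianPDFReal_nonneg _ _ _)]
  have hb : (0:ℝ) < (2 * (v:ℝ))⁻¹ := by positivity
  have hint1 : Integrable (fun t : ℝ => gaussianPDFReal m v t) volume :=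
    integrable_gaussianPDFReal m v
  have h0 : Integrable (fun x : ℝ => |x| * rexp (- x^2 / (2*(v:ℝ)))) volume := by
    have h1 := (integrable_rpow_mul_exp_neg_mul_sq hb (by norm_num : (-1:ℝ) < 1)).abs
    refine h1.congr (ae_of_all _ fun x => ?_)
    show |x ^ (1:ℝ) * rexp (-(2 * (v:ℝ))⁻¹ * x ^ 2)| = |x| * rexp (-x ^ 2 / (2 * (v:ℝ)))
    rw [Real.rpow_one, abs_mul, abs_of_pos (Real.exp_pos _)]
    congr 1
    field_simp
  have h2 : Integrable (fun t : ℝ => |t - m| * rexp (-(t-m)^2 / (2*(v:ℝ)))) volume :=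
    h0.comp_sub_right m
  set C : ℝ := (√(2 * π * (v:ℝ)))⁻¹ with hC
  have hCpos : 0 < C := by rw [hC]; positivity
  refine Integrable.mono' (g := fun t => (|c| + |m|) * gaussianPDFReal m v t
      + C * (|t - m| * rexp (-(t-m)^2 / (2*(v:ℝ)))))
    ((hint1.const_mul _).add (h2.const_mul _))
    (((continuous_const.sub continuous_id).max continuous_const).measurable.mul
      (measurable_gaussianPDFReal m v)).aestronglyMeasurable
    (ae_of_all _ fun t => ?_)
  have hpdf_nonneg := gaussianPDFReal_nonneg m v t
  have hmax : max (c - t) 0 ≤ |c| + |m| + |t - m| := by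
    apply max_le
    · have h1 := le_abs_self c
      have h2 := neg_le_abs (t - m)
      have h3 := neg_le_abs m
      linarith [abs_nonneg (t-m), abs_nonneg m]
    · positivity
  have hnorm : ‖max (c - t) 0 * gaussianPDFReal m v t‖
      = max (c - t) 0 * gaussianPDFReal m v t := by
    rw [Real.norm_eq_abs, abs_of_nonneg (mul_nonneg (le_max_right _ _) hpdf_nonneg)]
  rw [hnorm]
  have step : max (c - t) 0 * gaussianPDFReal m v t
      ≤ (|c| + |m| + |t - m|) * gaussianPDFReal m v t :=
    mul_le_mul_of_nonneg_right hmax hpdf_nonneg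
  have hunfold : gaussianPDFReal m v t = C * rexp (-(t-m)^2 / (2*(v:ℝ))) := by
    rw [gaussianPDFReal, hC]
  calc max (c - t) 0 * gaussianPDFReal m v t
      ≤ (|c| + |m| + |t - m|) * gaussianPDFReal m v t := step
    _ = (|c| + |m|) * gaussianPDFReal m v t + |t - m| * gaussianPDFReal m v t := by ring
    _ = (|c| + |m|) * gaussianPDFReal m v t
        + C * (|t - m| * rexp (-(t-m)^2 / (2*(v:ℝ)))) := by rw [hunfold]; ring

lemma gaussian_as_map (m : ℝ) {σ : ℝ} (hσ : 0 < σ) :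
    gaussianReal m ((σ^2).toNNReal)
      = Measure.map (fun x => σ * x + m) (gaussianReal 0 1) := by
  have h1 : Measure.map (fun x : ℝ => σ * x) (gaussianReal 0 1)
      = gaussianReal 0 ((σ^2).toNNReal) := by
    rw [gaussianReal_map_const_mul (μ := 0) (v := 1) σ]
    congr 1
    · ring
    · ext
      simp [Real.coe_toNNReal', sq_nonneg σ, le_max_iff]
  have h2 : (fun x : ℝ => σ * x + m) = (· + m) ∘ (fun x : ℝ => σ * x) := rfl
  rw [h2, ← Measure.map_map (measurable_add_const m) (by fun_prop), h1,
    gaussianReal_map_add_const m, zero_add]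

lemma cdf_gaussian (m : ℝ) {σ : ℝ} (hσ : 0 < σ) (s : ℝ) :
    ProbabilityTheory.cdf (gaussianReal m ((σ^2).toNNReal)) s = stdNormalCDF ((s - m)/σ) := by
  rw [stdNormalCDF, cdf_eq_real, cdf_eq_real, measureReal_def, measureReal_def, gaussian_as_map m hσ,
    Measure.map_apply (by fun_prop) measurableSet_Iic]
  congr 2
  ext x
  simp only [Set.mem_preimage, Set.mem_Iic]
  rw [le_div_iff₀ hσ]
  constructor <;> intro h <;> nlinarith

lemma integral_Iic_comp {g : ℝ → ℝ} (hg : Measurable g) {a : ℝ} (ha : 0 < a) (b c : ℝ) :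
    ∫ s in Set.Iic c, g ((s - b)/a) ∂volume
      = a * ∫ ξ in Set.Iic ((c - b)/a), g ξ ∂volume := by
  have hmap : Measure.map (fun ξ : ℝ => a * ξ + b) volume
      = ENNReal.ofReal |a⁻¹| • volume := by
    have h2 : (fun ξ : ℝ => a * ξ + b) = (· + b) ∘ (fun ξ : ℝ => a * ξ) := rfl
    rw [h2, ← Measure.map_map (measurable_add_const b) (by fun_prop),
      Real.map_volume_mul_left ha.ne', Measure.map_smul,
      map_add_right_eq_self volume b]
  set F : ℝ → ℝ := (Set.Iic c).indicator (fun s => g ((s - b)/a)) with hF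
  have hFmeas : Measurable F := ((hg.comp (by fun_prop)).indicator measurableSet_Iic)
  have hcomp : ∀ ξ : ℝ, F (a * ξ + b) = (Set.Iic ((c - b)/a)).indicator g ξ := by
    intro ξ
    by_cases hξ : ξ ≤ (c - b)/a
    · rw [hF, Set.indicator_of_mem (show a * ξ + b ∈ Set.Iic c by
        simp only [Set.mem_Iic]; rw [le_div_iff₀ ha] at hξ; nlinarith),
        Set.indicator_of_mem (show ξ ∈ Set.Iic ((c-b)/a) from hξ)]
      congr 1
      field_simp
      ring
    · rw [hF, Set.indicator_of_notMem (show a * ξ + b ∉ Set.Iic c by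
        simp only [Set.mem_Iic]; rw [le_div_iff₀ ha] at hξ; intro h; apply hξ; nlinarith),
        Set.indicator_of_notMem (show ξ ∉ Set.Iic ((c-b)/a) from hξ)]
  calc ∫ s in Set.Iic c, g ((s - b)/a) ∂volume
      = ∫ s, F s ∂volume := (integral_indicator measurableSet_Iic).symm
    _ = a * ∫ s, F s ∂(ENNReal.ofReal |a⁻¹| • volume) := by
        rw [integral_smul_measure, ENNReal.toReal_ofReal (abs_nonneg _),
          abs_of_pos (inv_pos.mpr ha)]
        rw [smul_eq_mul, ← mul_assoc, mul_inv_cancel₀ ha.ne', one_mul]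
    _ = a * ∫ s, F s ∂(Measure.map (fun ξ : ℝ => a * ξ + b) volume) := by rw [hmap]
    _ = a * ∫ ξ, F (a * ξ + b) ∂volume := by
        rw [integral_map (by fun_prop) hFmeas.aestronglyMeasurable]
    _ = a * ∫ ξ, (Set.Iic ((c - b)/a)).indicator g ξ ∂volume := by simp_rw [hcomp]
    _ = a * ∫ ξ in Set.Iic ((c - b)/a), g ξ ∂volume := by
        rw [integral_indicator measurableSet_Iic]

lemma integrableOn_Iic_comp {g : ℝ → ℝ} (hg : Measurable g) {a : ℝ} (ha : 0 < a) (b c : ℝ)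
    (h : IntegrableOn (fun s => g ((s - b)/a)) (Set.Iic c) volume) :
    IntegrableOn g (Set.Iic ((c - b)/a)) volume := by
  have hmap : Measure.map (fun ξ : ℝ => a * ξ + b) volume
      = ENNReal.ofReal |a⁻¹| • volume := by
    have h2 : (fun ξ : ℝ => a * ξ + b) = (· + b) ∘ (fun ξ : ℝ => a * ξ) := rfl
    rw [h2, ← Measure.map_map (measurable_add_const b) (by fun_prop),
      Real.map_volume_mul_left ha.ne', Measure.map_smul,
      map_add_right_eq_self volume b]
  set F : ℝ → ℝ := (Set.Iic c).indicator (fun s => g ((s - b)/a)) with hF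
  have hFmeas : Measurable F := ((hg.comp (by fun_prop)).indicator measurableSet_Iic)
  have hFint : Integrable F volume := (integrable_indicator_iff measurableSet_Iic).mpr h
  have hFint2 : Integrable F (ENNReal.ofReal |a⁻¹| • volume) := by
    refine hFint.smul_measure ?_
    simp
  rw [← hmap] at hFint2
  have := (integrable_map_measure hFmeas.aestronglyMeasurable (by fun_prop)).mp hFint2
  have hcomp : ∀ ξ : ℝ, F (a * ξ + b) = (Set.Iic ((c - b)/a)).indicator g ξ := by
    intro ξ
    by_cases hξ : ξ ≤ (c - b)/a
    · rw [hF, Set.indicator_of_mem (show a * ξ + b ∈ Set.Iic c by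
        simp only [Set.mem_Iic]; rw [le_div_iff₀ ha] at hξ; nlinarith),
        Set.indicator_of_mem (show ξ ∈ Set.Iic ((c-b)/a) from hξ)]
      congr 1
      field_simp
      ring
    · rw [hF, Set.indicator_of_notMem (show a * ξ + b ∉ Set.Iic c by
        simp only [Set.mem_Iic]; rw [le_div_iff₀ ha] at hξ; intro h; apply hξ; nlinarith),
        Set.indicator_of_notMem (show ξ ∉ Set.Iic ((c-b)/a) from hξ)]
  have : Integrable (fun ξ => (Set.Iic ((c - b)/a)).indicator g ξ) volume := by
    refine this.congr (ae_of_all _ fun ξ => ?_)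
    exact hcomp ξ
  rw [← integrable_indicator_iff measurableSet_Iic]
  exact this

/-- **equation (3) of the paper, `ρ = 0`.** For `n` i.i.d. normal demands
`Dᵢ ~ N(μ, σ²)` and an order quantity `X` with `Y = (X - μ)/σ`, the expected transshipment
amount `E[min(∑ᵢ Hᵢ, ∑ᵢ Eᵢ)]` equals `n σ ∫_{-∞}^{Y} (Φ(ξ) - Φ(√n ξ)) dξ`. -/
theorem expected_transshipment_eq
    {Ω : Type*} [MeasureSpace Ω] [IsProbabilityMeasure (ℙ : Measure Ω)]
    (n : ℕ) (D : Fin n → Ω → ℝ) (μ σ : ℝ) (hσ : 0 < σ)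
    (hmeas : ∀ i, Measurable (D i))
    (hD : ∀ i, Measure.map (D i) ℙ = gaussianReal μ (σ ^ 2).toNNReal)
    (hindep : iIndepFun D ℙ)
    (X : ℝ) :
    ∫ ω, min (∑ i, max (X - D i ω) 0) (∑ i, max (D i ω - X) 0) ∂ℙ
      = (n : ℝ) * σ *
        ∫ ξ in Set.Iic ((X - μ) / σ),
          (stdNormalCDF ξ - stdNormalCDF (Real.sqrt n * ξ)) := by
  rcases Nat.eq_zero_or_pos n with hn | hn
  · subst hn; simp
  have hnR : (0:ℝ) < n := by exact_mod_cast hn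
  set v : ℝ≥0 := (σ ^ 2).toNNReal with hvdef
  have hv : v ≠ 0 := by
    simp [hvdef, Real.toNNReal_eq_zero, not_le]
    positivity
  have hnv : (n : ℝ≥0) * v ≠ 0 := by
    simp [hv]
    omega
  haveI := gaussianReal_noAtoms (μ := μ) hv
  haveI := gaussianReal_noAtoms (μ := (n:ℝ) * μ) hnv
  have hsn : (0:ℝ) < Real.sqrt n := Real.sqrt_pos.mpr hnR
  have hsnsq : Real.sqrt n * Real.sqrt n = (n:ℝ) := Real.mul_self_sqrt (le_of_lt hnR)
  set S : Ω → ℝ := fun ω => ∑ i, D i ω with hSdef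
  have hSmeas : Measurable S := Finset.measurable_sum _ (fun i _ => hmeas i)
  have hS : Measure.map S ℙ = gaussianReal ((n:ℝ) * μ) ((n : ℝ≥0) * v) := by
    have := map_sum_gaussian hmeas hD hindep hv Finset.univ
    rwa [Finset.card_fin] at this
  have hvar : ((Real.sqrt n * σ) ^ 2).toNNReal = (n : ℝ≥0) * v := by
    ext
    rw [mul_pow, Real.sq_sqrt (le_of_lt hnR), Real.toNNReal_mul (le_of_lt hnR),
      Real.toNNReal_natCast, hvdef]
  -- pointwise identity
  have key : ∀ ω, min (∑ i, max (X - D i ω) 0) (∑ i, max (D i ω - X) 0)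
      = (∑ i, max (X - D i ω) 0) - max ((n:ℝ) * X - S ω) 0 := by
    intro ω
    have hab : (∑ i, max (X - D i ω) 0) - (∑ i, max (D i ω - X) 0) = (n:ℝ) * X - S ω := by
      rw [← Finset.sum_sub_distrib]
      have : ∀ i : Fin n, max (X - D i ω) 0 - max (D i ω - X) 0 = X - D i ω := by
        intro i
        rcases le_total (D i ω) X with h | h
        · rw [max_eq_left (by linarith), max_eq_right (by linarith), sub_zero]
        · rw [max_eq_right (by linarith), max_eq_left (by linarith)]; linarith
      rw [Finset.sum_congr rfl (fun i _ => this i), Finset.sum_sub_distrib,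
        Finset.sum_const, Finset.card_fin, hSdef]
      push_cast
      ring
    rcases le_total (∑ i, max (X - D i ω) 0) (∑ i, max (D i ω - X) 0) with h | h
    · rw [min_eq_left h, max_eq_right (by linarith [hab]), sub_zero]
    · rw [min_eq_right h, max_eq_left (by linarith [hab])]; linarith [hab]
  -- integrability
  have hHi : ∀ i : Fin n, Integrable (fun ω => max (X - D i ω) 0) ℙ := by
    intro i
    have h1 : Integrable (fun t => max (X - t) 0) (Measure.map (D i) ℙ) := by
      rw [hD i]; exact integrable_max_gaussian μ v hv X
    exact (integrable_map_measure (Continuous.aestronglyMeasurable ((continuous_const.sub continuous_id).max continuous_const))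
      (hmeas i).aemeasurable).mp h1
  have hHsum : Integrable (fun ω => ∑ i, max (X - D i ω) 0) ℙ :=
    integrable_finset_sum _ (fun i _ => hHi i)
  have hE : Integrable (fun ω => max ((n:ℝ) * X - S ω) 0) ℙ := by
    have h1 : Integrable (fun t => max ((n:ℝ) * X - t) 0) (Measure.map S ℙ) := by
      rw [hS]; exact integrable_max_gaussian _ _ hnv _
    exact (integrable_map_measure (Continuous.aestronglyMeasurable ((continuous_const.sub continuous_id).max continuous_const))
      hSmeas.aemeasurable).mp h1
  -- split integral
  rw [integral_congr_ae (ae_of_all _ key), integral_sub hHsum hE,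
    integral_finset_sum _ (fun i _ => hHi i)]
  -- individual H integrals
  have hΦmeas : Measurable stdNormalCDF := (monotone_cdf _).measurable
  have hHval : ∀ i : Fin n, ∫ ω, max (X - D i ω) 0 ∂ℙ
      = σ * ∫ ξ in Set.Iic ((X - μ) / σ), stdNormalCDF ξ ∂volume := by
    intro i
    calc ∫ ω, max (X - D i ω) 0 ∂ℙ
        = ∫ t, max (X - t) 0 ∂(Measure.map (D i) ℙ) :=
          (integral_map (hmeas i).aemeasurable
            (Continuous.aestronglyMeasurable ((continuous_const.sub continuous_id).max continuous_const))).symm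
      _ = ∫ t, max (X - t) 0 ∂(gaussianReal μ v) := by rw [hD i]
      _ = ∫ s in Set.Iic X, ProbabilityTheory.cdf (gaussianReal μ v) s ∂volume :=
          integral_max_eq _ X
      _ = ∫ s in Set.Iic X, stdNormalCDF ((s - μ)/σ) ∂volume := by
          refine setIntegral_congr_fun measurableSet_Iic (fun s _ => ?_)
          exact cdf_gaussian μ hσ s
      _ = σ * ∫ ξ in Set.Iic ((X - μ) / σ), stdNormalCDF ξ ∂volume :=
          integral_Iic_comp hΦmeas hσ μ X
  -- E integral
  have hYhat : ((n:ℝ) * X - (n:ℝ) * μ) / (Real.sqrt n * σ) = Real.sqrt n * ((X - μ)/σ) := by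
    rw [show (n:ℝ) * X - (n:ℝ) * μ = Real.sqrt n * (Real.sqrt n * (X - μ)) by
        rw [← mul_assoc, hsnsq]; ring,
      mul_div_mul_left _ _ hsn.ne', mul_div_assoc]
  have hEval : ∫ ω, max ((n:ℝ) * X - S ω) 0 ∂ℙ
      = (Real.sqrt n * σ) * ∫ ξ in Set.Iic (Real.sqrt n * ((X - μ)/σ)), stdNormalCDF ξ ∂volume := by
    calc ∫ ω, max ((n:ℝ) * X - S ω) 0 ∂ℙ
        = ∫ t, max ((n:ℝ) * X - t) 0 ∂(Measure.map S ℙ) :=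
          (integral_map hSmeas.aemeasurable
            (Continuous.aestronglyMeasurable ((continuous_const.sub continuous_id).max continuous_const))).symm
      _ = ∫ t, max ((n:ℝ) * X - t) 0 ∂(gaussianReal ((n:ℝ)*μ) ((n:ℝ≥0) * v)) := by rw [hS]
      _ = ∫ s in Set.Iic ((n:ℝ)*X),
            ProbabilityTheory.cdf (gaussianReal ((n:ℝ)*μ) ((n:ℝ≥0) * v)) s ∂volume :=
          integral_max_eq _ _
      _ = ∫ s in Set.Iic ((n:ℝ)*X),
            stdNormalCDF ((s - (n:ℝ)*μ)/(Real.sqrt n * σ)) ∂volume := by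
          refine setIntegral_congr_fun measurableSet_Iic (fun s _ => ?_)
          rw [← hvar]
          exact cdf_gaussian ((n:ℝ)*μ) (by positivity) s
      _ = (Real.sqrt n * σ) * ∫ ξ in Set.Iic (((n:ℝ)*X - (n:ℝ)*μ)/(Real.sqrt n * σ)),
            stdNormalCDF ξ ∂volume := integral_Iic_comp hΦmeas (by positivity) _ _
      _ = (Real.sqrt n * σ) * ∫ ξ in Set.Iic (Real.sqrt n * ((X - μ)/σ)),
            stdNormalCDF ξ ∂volume := by rw [hYhat]
  have hg2 : Measurable (fun ξ : ℝ => stdNormalCDF (Real.sqrt n * ξ)) :=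
    hΦmeas.comp (by fun_prop)
  set Y : ℝ := (X - μ) / σ with hYdef
  have hswap2 : ∫ s in Set.Iic (Real.sqrt n * Y), stdNormalCDF s ∂volume
      = Real.sqrt n * ∫ ξ in Set.Iic Y, stdNormalCDF (Real.sqrt n * ξ) ∂volume := by
    have h := integral_Iic_comp (g := fun ξ : ℝ => stdNormalCDF (Real.sqrt n * ξ)) hg2 hsn 0
      (Real.sqrt n * Y)
    rw [show (Real.sqrt n * Y - 0)/Real.sqrt n = Y by field_simp; ring] at h
    rw [← h]
    refine setIntegral_congr_fun measurableSet_Iic (fun s _ => ?_)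
    congr 1
    field_simp
    ring
  -- integrability on Iic Y
  have hI1 : IntegrableOn stdNormalCDF (Set.Iic Y) volume := by
    have h0 : IntegrableOn (ProbabilityTheory.cdf (gaussianReal μ v)) (Set.Iic X) volume :=
      integrableOn_cdf _ X (integrable_max_gaussian μ v hv X)
    have h0' : IntegrableOn (fun s => stdNormalCDF ((s - μ)/σ)) (Set.Iic X) volume :=
      h0.congr (ae_of_all _ fun s => cdf_gaussian μ hσ s)
    exact integrableOn_Iic_comp hΦmeas hσ μ X h0'
  have hI2' : IntegrableOn stdNormalCDF (Set.Iic (Real.sqrt n * Y)) volume := by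
    have h0 : IntegrableOn (ProbabilityTheory.cdf (gaussianReal ((n:ℝ)*μ) ((n:ℝ≥0) * v)))
        (Set.Iic ((n:ℝ)*X)) volume :=
      integrableOn_cdf _ _ (integrable_max_gaussian _ _ hnv _)
    have h0' : IntegrableOn (fun s => stdNormalCDF ((s - (n:ℝ)*μ)/(Real.sqrt n * σ)))
        (Set.Iic ((n:ℝ)*X)) volume := by
      refine h0.congr (ae_of_all _ fun s => ?_)
      rw [← hvar]
      exact cdf_gaussian ((n:ℝ)*μ) (by positivity) s
    have := integrableOn_Iic_comp hΦmeas (by positivity : (0:ℝ) < Real.sqrt n * σ)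
      ((n:ℝ)*μ) ((n:ℝ)*X) h0'
    rwa [hYhat] at this
  have hI2 : IntegrableOn (fun ξ => stdNormalCDF (Real.sqrt n * ξ)) (Set.Iic Y) volume := by
    have h0' : IntegrableOn (fun s => stdNormalCDF (Real.sqrt n * ((s - 0)/Real.sqrt n)))
        (Set.Iic (Real.sqrt n * Y)) volume := by
      refine hI2'.congr (ae_of_all _ fun s => ?_)
      congr 1
      field_simp
      ring
    have := integrableOn_Iic_comp (g := fun ξ : ℝ => stdNormalCDF (Real.sqrt n * ξ))
      hg2 hsn 0 (Real.sqrt n * Y) h0'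
    rwa [show (Real.sqrt n * Y - 0)/Real.sqrt n = Y by field_simp; ring] at this
  rw [Finset.sum_congr rfl (fun i _ => hHval i), Finset.sum_const, Finset.card_fin,
    hEval, hswap2, integral_sub hI1 hI2]
  set A := ∫ ξ in Set.Iic Y, stdNormalCDF ξ ∂volume with hA
  set B := ∫ ξ in Set.Iic Y, stdNormalCDF (Real.sqrt n * ξ) ∂volume with hB
  rw [nsmul_eq_mul]
  linear_combination (-(σ * B)) * hsnsq
end

section
/- Fix L > 1 and define ω(Y) = ∫_{−∞}^{Y} (Φ(ξ) − Φ(L·ξ)) dξ for real Y, where Φ is the cdf of the standard normal distribution. Then ω is strictly increasing on (−∞, 0), strictly decreasing on (0, ∞), and attains its unique maximum over ℝ at Y = 0. -/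
open MeasureTheory ProbabilityTheory Real

lemma stdNormalCDF_eq (x : ℝ) :
    stdNormalCDF x = ∫ t in Set.Iic x, gaussianPDFReal 0 1 t := by
  rw [stdNormalCDF, cdf_eq_real, measureReal_def, gaussianReal_apply_eq_integral 0 one_ne_zero,
    ENNReal.toReal_ofReal (setIntegral_nonneg measurableSet_Iic
      (fun t _ => gaussianPDFReal_nonneg 0 1 t))]

lemma measurable_stdNormalCDF : Measurable stdNormalCDF :=
  (monotone_cdf _).measurable

lemma stdNormalCDF_diff {a b : ℝ} (h : a ≤ b) :
    stdNormalCDF b - stdNormalCDF a = ∫ t in Set.Ioc a b, gaussianPDFReal 0 1 t := by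
  rw [stdNormalCDF_eq, stdNormalCDF_eq, ← Set.Iic_union_Ioc_eq_Iic h,
    setIntegral_union (Set.Iic_disjoint_Ioc le_rfl) measurableSet_Ioc
      ((integrable_gaussianPDFReal 0 1).integrableOn)
      ((integrable_gaussianPDFReal 0 1).integrableOn)]
  ring

lemma pdf_integral_pos {a b : ℝ} (h : a < b) :
    0 < ∫ t in Set.Ioc a b, gaussianPDFReal 0 1 t := by
  rw [setIntegral_pos_iff_support_of_nonneg_ae
    (ae_of_all _ (fun t => gaussianPDFReal_nonneg 0 1 t))
    ((integrable_gaussianPDFReal 0 1).integrableOn)]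
  have hs : Function.support (gaussianPDFReal 0 1) = Set.univ :=
    Set.eq_univ_of_forall (fun x => (gaussianPDFReal_pos 0 1 x one_ne_zero).ne')
  rw [hs, Set.univ_inter, Real.volume_Ioc]
  simp [h]

lemma f_pos_of_neg {L ξ : ℝ} (hL : 1 < L) (hξ : ξ < 0) :
    0 < stdNormalCDF ξ - stdNormalCDF (L * ξ) := by
  have h : L * ξ < ξ := by nlinarith
  rw [stdNormalCDF_diff h.le]
  exact pdf_integral_pos h

lemma f_neg_of_pos {L ξ : ℝ} (hL : 1 < L) (hξ : 0 < ξ) :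
    stdNormalCDF ξ - stdNormalCDF (L * ξ) < 0 := by
  have h : ξ < L * ξ := by nlinarith
  have := pdf_integral_pos h
  rw [← stdNormalCDF_diff h.le] at this
  linarith

lemma f_nonneg_of_nonpos {L ξ : ℝ} (hL : 1 < L) (hξ : ξ ≤ 0) :
    0 ≤ stdNormalCDF ξ - stdNormalCDF (L * ξ) := by
  have h : L * ξ ≤ ξ := by nlinarith
  exact sub_nonneg.2 (monotone_cdf _ h)

lemma f_nonpos_of_nonneg {L ξ : ℝ} (hL : 1 < L) (hξ : 0 ≤ ξ) :
    stdNormalCDF ξ - stdNormalCDF (L * ξ) ≤ 0 := by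
  have h : ξ ≤ L * ξ := by nlinarith
  exact sub_nonpos.2 (monotone_cdf _ h)

lemma pdf_mono_nonpos {t ξ : ℝ} (ht : t ≤ ξ) (hξ : ξ ≤ 0) :
    gaussianPDFReal 0 1 t ≤ gaussianPDFReal 0 1 ξ := by
  unfold gaussianPDFReal
  have h2 : ξ ^ 2 ≤ t ^ 2 := by nlinarith
  refine mul_le_mul_of_nonneg_left (exp_le_exp.2 ?_) (by positivity)
  push_cast
  nlinarith

lemma f_le_bound {L ξ : ℝ} (hL : 1 < L) (hξ : ξ ≤ 0) :
    stdNormalCDF ξ - stdNormalCDF (L * ξ) ≤ (ξ - L * ξ) * gaussianPDFReal 0 1 ξ := by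
  have h : L * ξ ≤ ξ := by nlinarith
  rw [stdNormalCDF_diff h]
  calc ∫ t in Set.Ioc (L * ξ) ξ, gaussianPDFReal 0 1 t
      ≤ ∫ _ in Set.Ioc (L * ξ) ξ, gaussianPDFReal 0 1 ξ :=
        setIntegral_mono_on ((integrable_gaussianPDFReal 0 1).integrableOn)
          (integrableOn_const (by rw [Real.volume_Ioc]; exact ENNReal.ofReal_ne_top))
          measurableSet_Ioc (fun t ht => pdf_mono_nonpos ht.2 hξ)
    _ = (ξ - L * ξ) * gaussianPDFReal 0 1 ξ := by
        rw [setIntegral_const, Real.volume_real_Ioc_of_le (by linarith), smul_eq_mul]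

lemma stdNormalCDF_nonneg (x : ℝ) : 0 ≤ stdNormalCDF x := cdf_nonneg _ _
lemma stdNormalCDF_le_one (x : ℝ) : stdNormalCDF x ≤ 1 := cdf_le_one _ _

lemma integrableOn_f_Iic {L : ℝ} (hL : 1 < L) (Y : ℝ) :
    IntegrableOn (fun ξ => stdNormalCDF ξ - stdNormalCDF (L * ξ)) (Set.Iic Y) := by
  have hmeas : AEStronglyMeasurable (fun ξ => stdNormalCDF ξ - stdNormalCDF (L * ξ))
      (volume : Measure ℝ) :=
    ((measurable_stdNormalCDF.sub
      (measurable_stdNormalCDF.comp (measurable_const_mul L))).aestronglyMeasurable)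
  have h0 : IntegrableOn (fun ξ => stdNormalCDF ξ - stdNormalCDF (L * ξ)) (Set.Iic 0) := by
    have hg : Integrable
        (fun x : ℝ => (L - 1) * (√(2 * π * ((1:NNReal):ℝ)))⁻¹ * ‖x * rexp (-(2⁻¹:ℝ) * x ^ 2)‖)
        volume :=
      ((integrable_mul_exp_neg_mul_sq (by norm_num : (0:ℝ) < 2⁻¹)).norm.const_mul _)
    refine Integrable.mono' hg.integrableOn hmeas.restrict ?_
    rw [ae_restrict_iff' measurableSet_Iic]
    refine ae_of_all _ fun ξ hξ => ?_
    rw [Real.norm_eq_abs, abs_of_nonneg (f_nonneg_of_nonpos hL hξ)]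
    refine (f_le_bound hL hξ).trans ?_
    have hexp : rexp (-(ξ - 0) ^ 2 / (2 * ((1:NNReal):ℝ))) = rexp (-(2⁻¹:ℝ) * ξ ^ 2) := by
      norm_num; ring
    rw [norm_mul, Real.norm_eq_abs, Real.norm_eq_abs, abs_of_nonpos hξ,
      abs_of_pos (exp_pos _)]
    unfold gaussianPDFReal
    rw [hexp]
    exact le_of_eq (by ring)
  rcases le_or_gt Y 0 with h | h
  · exact h0.mono_set (Set.Iic_subset_Iic.2 h)
  · rw [← Set.Iic_union_Ioc_eq_Iic h.le]
    refine h0.union ?_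
    refine Integrable.mono' (g := fun _ => (2:ℝ))
      (integrableOn_const (by rw [Real.volume_Ioc]; exact ENNReal.ofReal_ne_top))
      hmeas.restrict (ae_of_all _ fun ξ => ?_)
    show |stdNormalCDF ξ - stdNormalCDF (L * ξ)| ≤ 2
    rw [abs_le]
    constructor
    · have := stdNormalCDF_nonneg ξ; have := stdNormalCDF_le_one (L * ξ); linarith
    · have := stdNormalCDF_le_one ξ; have := stdNormalCDF_nonneg (L * ξ); linarith

/-- **Theorem 2 of the paper.** For `L > 1`, the function
`ω(Y) = ∫_{-∞}^{Y} (Φ(ξ) - Φ(L ξ)) dξ` is strictly increasing on `(-∞, 0)`, strictly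
decreasing on `(0, ∞)`, and attains its unique maximum over `ℝ` at `Y = 0`. -/
theorem expected_transshipment_max_at_zero (L : ℝ) (hL : 1 < L)
    (ω : ℝ → ℝ)
    (hω : ∀ Y : ℝ, ω Y = ∫ ξ in Set.Iic Y, (stdNormalCDF ξ - stdNormalCDF (L * ξ))) :
    StrictMonoOn ω (Set.Iio 0) ∧ StrictAntiOn ω (Set.Ioi 0) ∧
      ∀ Y : ℝ, Y ≠ 0 → ω Y < ω 0 := by
  set f : ℝ → ℝ := fun ξ => stdNormalCDF ξ - stdNormalCDF (L * ξ) with hf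
  have hsub : ∀ a b : ℝ, a ≤ b → Set.Ioc a b ⊆ Set.Iic b := fun a b _ x hx => hx.2
  have hdiff : ∀ a b : ℝ, a ≤ b → ω b = ω a + ∫ ξ in Set.Ioc a b, f ξ := by
    intro a b hab
    rw [hω, hω, ← Set.Iic_union_Ioc_eq_Iic hab,
      setIntegral_union (Set.Iic_disjoint_Ioc le_rfl) measurableSet_Ioc
        (integrableOn_f_Iic hL a)
        ((integrableOn_f_Iic hL b).mono_set (hsub a b hab))]
  have key1 : ∀ a b : ℝ, a < b → b ≤ 0 → ω a < ω b := by
    intro a b hab hb0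
    rw [hdiff a b hab.le]
    have hnn : 0 ≤ᵐ[volume.restrict (Set.Ioc a b)] f :=
      (ae_restrict_iff' measurableSet_Ioc).2
        (ae_of_all _ fun ξ hξ => f_nonneg_of_nonpos hL (hξ.2.trans hb0))
    have hint : IntegrableOn f (Set.Ioc a b) :=
      (integrableOn_f_Iic hL b).mono_set (hsub a b hab.le)
    have hpos : 0 < ∫ ξ in Set.Ioc a b, f ξ := by
      rw [setIntegral_pos_iff_support_of_nonneg_ae hnn hint]
      have hm : (0:ENNReal) < volume (Set.Ioo a b) := by
        rw [Real.volume_Ioo]; simp [hab]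
      refine hm.trans_le (measure_mono (fun x (hx : x ∈ Set.Ioo a b) => ?_))
      exact ⟨(f_pos_of_neg hL (lt_of_lt_of_le hx.2 hb0)).ne',
          ⟨hx.1, hx.2.le⟩⟩
    linarith
  have key2 : ∀ a b : ℝ, 0 ≤ a → a < b → ω b < ω a := by
    intro a b ha0 hab
    rw [hdiff a b hab.le]
    have hint : IntegrableOn f (Set.Ioc a b) :=
      (integrableOn_f_Iic hL b).mono_set (hsub a b hab.le)
    have hnn : 0 ≤ᵐ[volume.restrict (Set.Ioc a b)] (fun ξ => -f ξ) :=
      (ae_restrict_iff' measurableSet_Ioc).2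
        (ae_of_all _ fun ξ hξ => neg_nonneg.2 (f_nonpos_of_nonneg hL (ha0.trans hξ.1.le)))
    have hpos : 0 < ∫ ξ in Set.Ioc a b, -f ξ := by
      rw [setIntegral_pos_iff_support_of_nonneg_ae hnn hint.neg]
      have hm : (0:ENNReal) < volume (Set.Ioo a b) := by
        rw [Real.volume_Ioo]; simp [hab]
      refine hm.trans_le (measure_mono (fun x (hx : x ∈ Set.Ioo a b) => ?_))
      exact ⟨(neg_pos.2 (f_neg_of_pos hL (ha0.trans_lt hx.1))).ne',
          ⟨hx.1, hx.2.le⟩⟩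
    rw [integral_neg] at hpos
    linarith
  refine ⟨fun a _ b hb hab => key1 a b hab (le_of_lt hb),
    fun a ha _ _ hab => key2 a _ (le_of_lt ha) hab, fun Y hY => ?_⟩
  rcases hY.lt_or_gt with h | h
  · exact key1 Y 0 h le_rfl
  · exact key2 0 Y le_rfl h
end

section
/- Let R ∈ (0,1), γ ∈ [0,1), L > 0, and let Y be a real number satisfying γ·Φ(Y) + (1−γ)·Φ(L·Y) = R, where Φ is the cdf of the standard normal distribution. Then: if R > 1/2 then Y > 0; if R < 1/2 then Y < 0; and if R = 1/2 then Y = 0. -/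
open MeasureTheory ProbabilityTheory Real

lemma gaussian_Ioc_pos {a b : ℝ} (hab : a < b) : 0 < (gaussianReal 0 1) (Set.Ioc a b) := by
  rw [gaussianReal_apply 0 one_ne_zero (Set.Ioc a b)]
  rw [MeasureTheory.setLIntegral_pos_iff (measurable_gaussianPDF 0 1)]
  have hsupp : Function.support (gaussianPDF 0 1) = Set.univ := by
    ext x
    simp only [Function.mem_support, Set.mem_univ, iff_true]
    exact (gaussianPDF_pos 0 one_ne_zero x).ne'
  rw [hsupp, Set.univ_inter, Real.volume_Ioc]
  simp [sub_pos.mpr hab]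

lemma stdNormalCDF_strictMono : StrictMono stdNormalCDF := by
  intro a b hab
  unfold stdNormalCDF
  rw [cdf_eq_real, cdf_eq_real, measureReal_def, measureReal_def]
  have hsplit : (gaussianReal 0 1) (Set.Iic b)
      = (gaussianReal 0 1) (Set.Iic a) + (gaussianReal 0 1) (Set.Ioc a b) := by
    rw [← measure_union (by exact Set.Iic_disjoint_Ioc le_rfl) measurableSet_Ioc,
      Set.Iic_union_Ioc_eq_Iic hab.le]
  have hfin : ∀ s : Set ℝ, (gaussianReal 0 1) s ≠ ⊤ := fun s => measure_ne_top _ s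
  rw [hsplit]
  have h1 := gaussian_Ioc_pos hab
  rw [ENNReal.toReal_add (hfin _) (hfin _)]
  have : 0 < ((gaussianReal 0 1) (Set.Ioc a b)).toReal :=
    ENNReal.toReal_pos h1.ne' (hfin _)
  linarith

lemma stdNormalCDF_zero : stdNormalCDF 0 = 1 / 2 := by
  have hmap : (gaussianReal 0 1).map ((-1 : ℝ) * ·) = gaussianReal 0 1 := by
    rw [gaussianReal_map_const_mul (-1 : ℝ)]
    norm_num
  have hmeas : Measurable ((-1 : ℝ) * ·) := measurable_id'.const_mul _
  have hIci : (gaussianReal 0 1) (Set.Ici (0 : ℝ)) = (gaussianReal 0 1) (Set.Iic (0 : ℝ)) := by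
    conv_lhs => rw [← hmap]
    rw [Measure.map_apply hmeas measurableSet_Ici]
    congr 1
    ext x
    simp only [Set.mem_preimage, Set.mem_Ici, Set.mem_Iic]
    constructor <;> intro h <;> nlinarith
  have hzero : (gaussianReal 0 1) ({0} : Set ℝ) = 0 := by
    rw [gaussianReal_apply 0 one_ne_zero]
    simp [lintegral_singleton]
  have hunion : (gaussianReal 0 1) (Set.Iic (0:ℝ)) + (gaussianReal 0 1) (Set.Ici (0:ℝ)) = 1 := by
    have := measure_union_add_inter (μ := gaussianReal 0 1) (t := Set.Ici (0:ℝ))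
      (Set.Iic (0:ℝ)) measurableSet_Ici
    rw [Set.Iic_union_Ici, Set.Iic_inter_Ici, Set.Icc_self, hzero, add_zero, measure_univ] at this
    exact this.symm
  rw [hIci, ← two_mul] at hunion
  unfold stdNormalCDF
  rw [cdf_eq_real, measureReal_def]
  have h2 : (gaussianReal 0 1) (Set.Iic (0:ℝ)) = 1/2 := by
    rw [← ENNReal.eq_div_iff (by norm_num) (by norm_num)] at hunion
    rw [hunion]
  rw [h2]
  simp [ENNReal.toReal_div]

/-- **Lemma 1 of the paper.** If `γ Φ(Y) + (1-γ) Φ(L Y) = R` with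
`R ∈ (0,1)`, `γ ∈ [0,1)`, `L > 0`, then the sign of `Y` matches the sign of `R - 1/2`. -/
theorem optimal_quantity_sign
    (R γ L Y : ℝ) (hR : R ∈ Set.Ioo (0 : ℝ) 1) (hγ : γ ∈ Set.Ico (0 : ℝ) 1) (hL : 0 < L)
    (hY : γ * stdNormalCDF Y + (1 - γ) * stdNormalCDF (L * Y) = R) :
    (1 / 2 < R → 0 < Y) ∧ (R < 1 / 2 → Y < 0) ∧ (R = 1 / 2 → Y = 0) := by
  obtain ⟨hγ0, hγ1⟩ := hγ
  have hγ1' : 0 < 1 - γ := by linarith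
  have key_pos : 0 < Y → 1 / 2 < R := by
    intro hYpos
    have h1 : 1 / 2 < stdNormalCDF Y := by
      rw [← stdNormalCDF_zero]; exact stdNormalCDF_strictMono hYpos
    have h2 : 1 / 2 < stdNormalCDF (L * Y) := by
      rw [← stdNormalCDF_zero]; exact stdNormalCDF_strictMono (by positivity)
    nlinarith
  have key_neg : Y < 0 → R < 1 / 2 := by
    intro hYneg
    have h1 : stdNormalCDF Y < 1 / 2 := by
      rw [← stdNormalCDF_zero]; exact stdNormalCDF_strictMono hYneg
    have h2 : stdNormalCDF (L * Y) < 1 / 2 := by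
      rw [← stdNormalCDF_zero]
      exact stdNormalCDF_strictMono (mul_neg_of_pos_of_neg hL hYneg)
    nlinarith
  have key_zero : Y = 0 → R = 1 / 2 := by
    intro h0
    subst h0
    simp only [mul_zero, stdNormalCDF_zero] at hY
    linarith
  refine ⟨?_, ?_, ?_⟩
  · intro h
    rcases lt_trichotomy Y 0 with h' | h' | h'
    · linarith [key_neg h']
    · linarith [key_zero h']
    · exact h'
  · intro h
    rcases lt_trichotomy Y 0 with h' | h' | h'
    · exact h'
    · linarith [key_zero h']
    · linarith [key_pos h']
  · intro h
    rcases lt_trichotomy Y 0 with h' | h' | h'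
    · linarith [key_neg h']
    · exact h'
    · linarith [key_pos h']
end

section
/- Let R ∈ (1/2, 1), γ ∈ [0,1), ρ ∈ [0,1), and for each integer n ≥ 1 set Lₙ = √(n/(1+(n−1)ρ)) and let Yₙ be the unique real number satisfying γ·Φ(Yₙ) + (1−γ)·Φ(Lₙ·Yₙ) = R. Then the sequence (Yₙ) is strictly decreasing and positive: Y₁ > Y₂ > … > Yₙ > … > 0. -/
open MeasureTheory ProbabilityTheory Real

/-- `Lₙ = √(n / (1 + (n-1)ρ))`. -/
noncomputable def Lcoef (ρ : ℝ) (n : ℕ) : ℝ := Real.sqrt ((n : ℝ) / (1 + ((n : ℝ) - 1) * ρ))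

lemma Lcoef_pos {ρ : ℝ} (hρ : ρ ∈ Set.Ico (0 : ℝ) 1) {n : ℕ} (hn : 1 ≤ n) :
    0 < Lcoef ρ n := by
  apply Real.sqrt_pos.2
  have hn' : (1 : ℝ) ≤ (n : ℝ) := by exact_mod_cast hn
  have hden : 0 < 1 + ((n : ℝ) - 1) * ρ := by nlinarith [hρ.1]
  positivity

lemma Lcoef_strictMono {ρ : ℝ} (hρ : ρ ∈ Set.Ico (0 : ℝ) 1) {m n : ℕ} (hm : 1 ≤ m)
    (hmn : m < n) : Lcoef ρ m < Lcoef ρ n := by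
  have hm' : (1 : ℝ) ≤ (m : ℝ) := by exact_mod_cast hm
  have hmn' : (m : ℝ) < (n : ℝ) := by exact_mod_cast hmn
  have hdm : 0 < 1 + ((m : ℝ) - 1) * ρ := by nlinarith [hρ.1]
  have hdn : 0 < 1 + ((n : ℝ) - 1) * ρ := by nlinarith [hρ.1]
  apply Real.sqrt_lt_sqrt
  · positivity
  · rw [div_lt_div_iff₀ hdm hdn]
    nlinarith [hρ.1, hρ.2]

/-- **Theorem 3 of the paper, over-mean case.** For `R ∈ (1/2, 1)`, the
standardized optimal order quantities `Yₙ`, solving `γ Φ(Yₙ) + (1-γ) Φ(Lₙ Yₙ) = R`, form a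
strictly decreasing positive sequence: `Y₁ > Y₂ > ... > Yₙ > ... > 0`. -/
theorem optimal_quantities_decreasing_over_mean
    (R γ ρ : ℝ) (hR : R ∈ Set.Ioo (1 / 2 : ℝ) 1) (hγ : γ ∈ Set.Ico (0 : ℝ) 1)
    (hρ : ρ ∈ Set.Ico (0 : ℝ) 1) (Y : ℕ → ℝ)
    (hY : ∀ n : ℕ, 1 ≤ n →
      γ * stdNormalCDF (Y n) + (1 - γ) * stdNormalCDF (Lcoef ρ n * Y n) = R) :
    (∀ n : ℕ, 1 ≤ n → 0 < Y n) ∧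
      (∀ m n : ℕ, 1 ≤ m → m < n → Y n < Y m) := by
  have hγ0 : 0 ≤ γ := hγ.1
  have hγ1 : 0 < 1 - γ := by linarith [hγ.2]
  have hpos : ∀ n : ℕ, 1 ≤ n → 0 < Y n := by
    intro n hn
    by_contra h
    push_neg at h
    have hL := Lcoef_pos hρ hn
    have h1 : stdNormalCDF (Y n) ≤ 1 / 2 := by
      rw [← stdNormalCDF_zero]
      exact stdNormalCDF_strictMono.monotone h
    have h2 : stdNormalCDF (Lcoef ρ n * Y n) ≤ 1 / 2 := by
      rw [← stdNormalCDF_zero]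
      exact stdNormalCDF_strictMono.monotone (by nlinarith)
    have := hY n hn
    nlinarith [hR.1]
  refine ⟨hpos, fun m n hm hmn => ?_⟩
  have hn : 1 ≤ n := le_trans hm hmn.le
  have hYm := hpos m hm
  have hLmn : Lcoef ρ m * Y m < Lcoef ρ n * Y m :=
    mul_lt_mul_of_pos_right (Lcoef_strictMono hρ hm hmn) hYm
  have hkey : γ * stdNormalCDF (Y n) + (1 - γ) * stdNormalCDF (Lcoef ρ n * Y n)
      < γ * stdNormalCDF (Y m) + (1 - γ) * stdNormalCDF (Lcoef ρ n * Y m) := by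
    rw [hY n hn, ← hY m hm]
    have := stdNormalCDF_strictMono hLmn
    nlinarith
  by_contra h
  push_neg at h
  have h1 : stdNormalCDF (Y m) ≤ stdNormalCDF (Y n) := stdNormalCDF_strictMono.monotone h
  have h2 : stdNormalCDF (Lcoef ρ n * Y m) ≤ stdNormalCDF (Lcoef ρ n * Y n) :=
    stdNormalCDF_strictMono.monotone
      (mul_le_mul_of_nonneg_left h (Lcoef_pos hρ hn).le)
  nlinarith
end

section
/- Let R ∈ (0, 1/2), γ ∈ [0,1), ρ ∈ [0,1), and for each integer n ≥ 1 set Lₙ = √(n/(1+(n−1)ρ)) and let Yₙ be the unique real number satisfying γ·Φ(Yₙ) + (1−γ)·Φ(Lₙ·Yₙ) = R. Then the sequence (Yₙ) is strictly increasing and negative: Y₁ < Y₂ < … < Yₙ < … < 0. -/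
open MeasureTheory ProbabilityTheory Real

lemma stdNormalCDF_mono : Monotone stdNormalCDF := fun _ _ h =>
  ProbabilityTheory.monotone_cdf _ h

/-- **Theorem 3 of the paper, under-mean case.** For `R ∈ (0, 1/2)`, the
standardized optimal order quantities `Yₙ`, solving `γ Φ(Yₙ) + (1-γ) Φ(Lₙ Yₙ) = R`, form a
strictly increasing negative sequence: `Y₁ < Y₂ < ... < Yₙ < ... < 0`. -/
theorem optimal_quantities_increasing_under_mean
    (R γ ρ : ℝ) (hR : R ∈ Set.Ioo (0 : ℝ) (1 / 2)) (hγ : γ ∈ Set.Ico (0 : ℝ) 1)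
    (hρ : ρ ∈ Set.Ico (0 : ℝ) 1) (Y : ℕ → ℝ)
    (hY : ∀ n : ℕ, 1 ≤ n →
      γ * stdNormalCDF (Y n) + (1 - γ) * stdNormalCDF (Lcoef ρ n * Y n) = R) :
    (∀ n : ℕ, 1 ≤ n → Y n < 0) ∧
      (∀ m n : ℕ, 1 ≤ m → m < n → Y m < Y n) := by
  obtain ⟨hR0, hR2⟩ := hR
  obtain ⟨hγ0, hγ1⟩ := hγ
  have hneg : ∀ n : ℕ, 1 ≤ n → Y n < 0 := by
    intro n hn
    by_contra h
    push_neg at h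
    have hL := Lcoef_pos hρ hn
    have h1 : (1 : ℝ) / 2 ≤ stdNormalCDF (Y n) := by
      rw [← stdNormalCDF_zero]; exact stdNormalCDF_mono h
    have h2 : (1 : ℝ) / 2 ≤ stdNormalCDF (Lcoef ρ n * Y n) := by
      rw [← stdNormalCDF_zero]; exact stdNormalCDF_mono (mul_nonneg hL.le h)
    have := hY n hn
    nlinarith
  refine ⟨hneg, fun m n hm hmn => ?_⟩
  by_contra h
  push_neg at h
  have hn : 1 ≤ n := hm.trans hmn.le
  have hYm := hneg m hm
  have hLm := Lcoef_pos hρ hm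
  have hLn := Lcoef_pos hρ hn
  have hL := Lcoef_strictMono hρ hm hmn
  have h1 : stdNormalCDF (Y n) ≤ stdNormalCDF (Y m) := stdNormalCDF_mono h
  have h2 : stdNormalCDF (Lcoef ρ n * Y n) < stdNormalCDF (Lcoef ρ m * Y m) := by
    apply stdNormalCDF_strictMono
    calc Lcoef ρ n * Y n ≤ Lcoef ρ n * Y m := by
          exact mul_le_mul_of_nonneg_left h hLn.le
      _ < Lcoef ρ m * Y m := by exact mul_lt_mul_of_neg_right hL hYm
  have hem := hY m hm
  have hen := hY n hn
  nlinarith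
end
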